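/- Let g be a 6-dimensional nilpotent real Lie algebra with a complex product structure {J,E}, and suppose there is a 2-dimensional ideal u of g contained in the centre of g, invariant under J and E, such that [g,g] ⊆ u (i.e. the quotient g/u is abelian, isomorphic to ℝ⁴). Then the torsion-free connection ∇ associated to {J,E} is flat: R(x,y) = ∇ₓ∇ᵧ − ∇ᵧ∇ₓ − ∇_{[x,y]} = 0 for all x,y ∈ g. -/

import Mathlib

open Module LinearMap

variable {g : Type*} [LieRing g] [LieAlgebra ℝ g]

/-- A complex structure on a real Lie algebra: `J² = -id` and integrability. -/
def IsComplexStr (J : Module.End ℝ g) : Prop :=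
  (∀ x : g, J (J x) = -x) ∧
  (∀ x y : g, J ⁅x, y⁆ = ⁅J x, y⁆ + ⁅x, J y⁆ + J ⁅J x, J y⁆)

/-- A product structure on a real Lie algebra: `E² = id`, `E ≠ ±id` and integrability. -/
def IsProductStr (E : Module.End ℝ g) : Prop :=
  (∀ x : g, E (E x) = x) ∧ E ≠ LinearMap.id ∧ E ≠ -LinearMap.id ∧
  (∀ x y : g, E ⁅x, y⁆ = ⁅E x, y⁆ + ⁅x, E y⁆ - E ⁅E x, E y⁆)

/-- A complex product structure: a complex structure and a product structure
that anticommute. -/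
def IsCPS (J E : Module.End ℝ g) : Prop :=
  IsComplexStr J ∧ IsProductStr E ∧ ∀ x : g, J (E x) = -E (J x)

/-- The projection `π₊ : g → g₊` associated to a product structure. -/
noncomputable def pplus (E : Module.End ℝ g) : Module.End ℝ g :=
  (1 / 2 : ℝ) • (LinearMap.id + E)

/-- The projection `π₋ : g → g₋` associated to a product structure. -/
noncomputable def pminus (E : Module.End ℝ g) : Module.End ℝ g :=
  (1 / 2 : ℝ) • (LinearMap.id - E)

/-- The centre of a Lie algebra, as a submodule. -/
def centre (g : Type*) [LieRing g] [LieAlgebra ℝ g] : Submodule ℝ g where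
  carrier := {x | ∀ y : g, ⁅x, y⁆ = 0}
  zero_mem' := by intro y; simp
  add_mem' := by intro a b ha hb y; rw [add_lie, ha y, hb y, add_zero]
  smul_mem' := by intro c a ha y; rw [smul_lie, ha y, smul_zero]

attribute [local instance 100] LieRing.ofAssociativeRing

/-- Auxiliary: the linear map `x ↦ A ∘ ad(P x) ∘ B`. -/
noncomputable def connTerm (A B P : Module.End ℝ g) : g →ₗ[ℝ] Module.End ℝ g :=
  (LinearMap.llcomp ℝ g g g A ∘ₗ LinearMap.lcomp ℝ g B) ∘ₗ
    (LieAlgebra.ad ℝ g).toLinearMap ∘ₗ P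

/-- The torsion-free connection associated to a complex product structure `{J, E}`.
Its value `cpConn J E x y` equals
`−π₊ J ⁅π₊x, J π₊y⁆ − π₋ J ⁅π₋x, J π₋y⁆ + π₋ ⁅π₊x, π₋y⁆ + π₊ ⁅π₋x, π₊y⁆`,
which encodes the defining identities `∇_{x₊} y₊ = −π₊ J ⁅x₊, J y₊⁆`,
`∇_{x₋} y₋ = −π₋ J ⁅x₋, J y₋⁆`, `∇_{x₊} y₋ = π₋ ⁅x₊, y₋⁆`, `∇_{x₋} y₊ = π₊ ⁅x₋, y₊⁆`. -/
noncomputable def cpConn (J E : Module.End ℝ g) : g →ₗ[ℝ] Module.End ℝ g :=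
  -connTerm (pplus E ∘ₗ J) (J ∘ₗ pplus E) (pplus E)
    - connTerm (pminus E ∘ₗ J) (J ∘ₗ pminus E) (pminus E)
    + connTerm (pminus E) (pminus E) (pplus E)
    + connTerm (pplus E) (pplus E) (pminus E)

lemma connTerm_apply (A B P : Module.End ℝ g) (x y : g) :
    connTerm A B P x y = A ⁅P x, B y⁆ := rfl

lemma pplus_apply (E : Module.End ℝ g) (x : g) :
    pplus E x = (1/2 : ℝ) • (x + E x) := by
  simp [pplus]

lemma pminus_apply (E : Module.End ℝ g) (x : g) :
    pminus E x = (1/2 : ℝ) • (x - E x) := by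
  simp [pminus]

lemma cpConn_apply (J E : Module.End ℝ g) (x y : g) :
    cpConn J E x y =
      -(pplus E (J ⁅pplus E x, J (pplus E y)⁆))
      - pminus E (J ⁅pminus E x, J (pminus E y)⁆)
      + pminus E ⁅pplus E x, pminus E y⁆
      + pplus E ⁅pminus E x, pplus E y⁆ := rfl

/-- Let `g` be a 6-dimensional nilpotent real Lie algebra with a complex product
structure `{J,E}`, and suppose there is a 2-dimensional ideal `u` of `g` contained
in the centre of `g`, invariant under `J` and `E`, with `⁅g,g⁆ ⊆ u` (so the
quotient `g/u` is abelian, i.e. isomorphic to `ℝ⁴`).  Then the associated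
torsion-free connection `∇ = cpConn J E` is flat:
`R(x,y) = ∇ₓ∇ᵧ − ∇ᵧ∇ₓ − ∇_{⁅x,y⁆} = 0` for all `x,y ∈ g`. -/
theorem cpConn_flat_of_quotient_abelian [FiniteDimensional ℝ g]
    [LieRing.IsNilpotent g] (hdim : Module.finrank ℝ g = 6)
    (J E : Module.End ℝ g) (h : IsCPS J E)
    (u : Submodule ℝ g)
    (hu2 : Module.finrank ℝ u = 2)
    (hucent : u ≤ centre g)
    (huJ : ∀ x ∈ u, J x ∈ u) (huE : ∀ x ∈ u, E x ∈ u)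
    (hcomm : ∀ x y : g, ⁅x, y⁆ ∈ u) :
    ∀ x y : g,
      cpConn J E x ∘ₗ cpConn J E y - cpConn J E y ∘ₗ cpConn J E x
        - cpConn J E ⁅x, y⁆ = 0 := by
  obtain ⟨hJ, hE, hJE⟩ := h
  have hpu : ∀ x ∈ u, pplus E x ∈ u := by
    intro x hx
    rw [pplus_apply]
    exact u.smul_mem _ (u.add_mem hx (huE x hx))
  have hmu : ∀ x ∈ u, pminus E x ∈ u := by
    intro x hx
    rw [pminus_apply]
    exact u.smul_mem _ (u.sub_mem hx (huE x hx))
  -- the connection takes values in u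
  have hval : ∀ x y : g, cpConn J E x y ∈ u := by
    intro x y
    rw [cpConn_apply]
    refine u.add_mem (u.add_mem (u.sub_mem (u.neg_mem ?_) ?_) ?_) ?_
    · exact hpu _ (huJ _ (hcomm _ _))
    · exact hmu _ (huJ _ (hcomm _ _))
    · exact hmu _ (hcomm _ _)
    · exact hpu _ (hcomm _ _)
  -- the connection vanishes when the first argument is in u
  have hzero1 : ∀ x ∈ u, ∀ y : g, cpConn J E x y = 0 := by
    intro x hx y
    rw [cpConn_apply]
    rw [hucent (hpu x hx) _, hucent (hmu x hx) _, hucent (hpu x hx) _,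
      hucent (hmu x hx) _]
    simp
  -- the connection vanishes when the second argument is in u
  have hzero2 : ∀ x : g, ∀ y ∈ u, cpConn J E x y = 0 := by
    intro x y hy
    rw [cpConn_apply]
    have b1 : ⁅pplus E x, J (pplus E y)⁆ = 0 := by
      rw [← lie_skew, hucent (huJ _ (hpu y hy)) _, neg_zero]
    have b2 : ⁅pminus E x, J (pminus E y)⁆ = 0 := by
      rw [← lie_skew, hucent (huJ _ (hmu y hy)) _, neg_zero]
    have b3 : ⁅pplus E x, pminus E y⁆ = 0 := by
      rw [← lie_skew, hucent (hmu y hy) _, neg_zero]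
    have b4 : ⁅pminus E x, pplus E y⁆ = 0 := by
      rw [← lie_skew, hucent (hpu y hy) _, neg_zero]
    rw [b1, b2, b3, b4]
    simp
  intro x y
  ext z
  simp only [LinearMap.sub_apply, LinearMap.comp_apply, LinearMap.zero_apply]
  rw [hzero2 x _ (hval y z), hzero2 y _ (hval x z), hzero1 _ (hcomm x y) z]
  simp
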